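/- arXiv:0710.2051 — 5 statements merged into one kernel-verified Lean document; each statement's English description precedes it below -/
import Mathlib

section
/- Let A and B be 2×2 real matrices with det A = det B = 1, A ∉ {1, −1} and B ∉ {1, −1} (i.e. A and B are non-identity elements of PSL(2,ℝ)). Then the following are equivalent: (i) A·B = B·A or A·B = −B·A (i.e. A and B commute in PSL(2,ℝ)); (ii) A and B have exactly the same eigenvectors over ℂ, i.e. for every vector v ∈ ℂ², there exists μ ∈ ℂ with (A viewed as a complex matrix)·v = μ·v if and only if there exists ν ∈ ℂ with (B viewed as a complex matrix)·v = ν·v. In words: two non-identity elements of PSL(2,ℝ) commute if and only if they have the same fixed points. -/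
/-!
Over `ℂ`, a non-scalar `2 × 2` matrix `f` has a cyclic vector, so its commutant is `ℂ + ℂ f`;
hence a commuting non-scalar `g = a + b f` (`b ≠ 0`) has exactly the eigenvectors of `f`.
Conversely, if `f` and `g` have the same eigenvectors, complete a common eigenvector `v` to a
basis `v, w`. Both maps are then upper triangular, and whichever has distinct diagonal entries
has a second eigenvector, shared by the other; this forces `f g w = g f w`.
Finally `A B = -B A` is impossible in `SL(2, ℝ)`: it makes `A` and `B` traceless and orthogonal
for the trace form `trace (X * Y)`, which is Lorentzian on traceless matrices, while
`trace (A * A) = trace (B * B) = -2` makes them both timelike.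
-/

open Module

namespace Module.End

variable {K V : Type*} [Field K] [AddCommGroup V] [Module K V]

lemma exists_smul_eq_iff_of_eq_smul_one_add_smul {f g : End K V} {a b : K} (hb : b ≠ 0)
    (hg : g = a • 1 + b • f) (v : V) :
    (∃ μ : K, f v = μ • v) ↔ ∃ ν : K, g v = ν • v := by
  subst hg
  constructor
  · rintro ⟨μ, hμ⟩
    exact ⟨a + b * μ, by simp [hμ, add_smul, mul_smul]⟩
  · rintro ⟨ν, hν⟩
    refine ⟨b⁻¹ * (ν - a), ?_⟩
    simp only [LinearMap.add_apply, LinearMap.smul_apply, Module.End.one_apply] at hν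
    rw [mul_smul, sub_smul, ← hν, add_sub_cancel_left, smul_smul, inv_mul_cancel₀ hb, one_smul]

/-- In the basis `v, w` the maps are `[[μ, a], [0, b]]` and `[[ν, c], [0, d]]`. As `b ≠ μ`,
`w + (a / (b - μ)) • v` is an eigenvector of `f`, hence of `g`, which forces
`c * (μ - b) = a * (ν - d)`: the `v`-coefficient of `f (g w) = g (f w)`. -/
lemma apply_apply_comm_of_upperTriangular {f g : End K V} {v w : V}
    (hvw : LinearIndependent K ![v, w]) {μ ν a b c d : K} (hfv : f v = μ • v) (hgv : g v = ν • v)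
    (hfw : f w = a • v + b • w) (hgw : g w = c • v + d • w) (hbμ : b ≠ μ)
    (h : ∀ u, (∃ s : K, f u = s • u) → ∃ t : K, g u = t • u) : f (g w) = g (f w) := by
  obtain ⟨k, rfl⟩ : ∃ k, a = k * (b - μ) :=
    ⟨a / (b - μ), (div_mul_cancel₀ _ (sub_ne_zero.2 hbμ)).symm⟩
  obtain ⟨t, ht⟩ := h (w + k • v) ⟨b, by rw [map_add, map_smul, hfw, hfv]; module⟩
  rw [map_add, map_smul, hgw, hgv] at ht
  obtain ⟨hv, hw⟩ := LinearIndependent.pair_iff.1 hvw (c + k * ν - t * k) (d - t)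
    (by linear_combination (norm := module) ht)
  rw [hgw, hfw, map_add, map_add, map_smul, map_smul, map_smul, map_smul, hfv, hfw, hgv, hgw]
  linear_combination (norm := module) ((μ - b) • hv - (k * (μ - b)) • hw) • v

lemma span_range_pair_eq_top_of_finrank_eq_two (hV : finrank K V = 2) {v w : V}
    (hvw : LinearIndependent K ![v, w]) : Submodule.span K (Set.range ![v, w]) = ⊤ :=
  have := finite_of_finrank_eq_succ hV
  hvw.span_eq_top_of_card_eq_finrank' (by simp [hV])

lemma exists_eq_smul_add_smul_of_finrank_eq_two (hV : finrank K V = 2) {v w : V}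
    (hvw : LinearIndependent K ![v, w]) (x : V) : ∃ a b : K, x = a • v + b • w := by
  have hx : x ∈ Submodule.span K (Set.range ![v, w]) := by
    rw [span_range_pair_eq_top_of_finrank_eq_two hV hvw]; trivial
  obtain ⟨c, hc⟩ := (Submodule.mem_span_range_iff_exists_fun K).1 hx
  exact ⟨c 0, c 1, by simpa [Fin.sum_univ_two] using hc.symm⟩

theorem exists_eq_smul_one_add_smul_of_commute (hV : finrank K V = 2) {f g : End K V}
    (hf : ∀ c : K, f ≠ c • 1) (hfg : Commute f g) : ∃ a b : K, g = a • 1 + b • f := by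
  obtain ⟨u, hu⟩ : ∃ u, LinearIndependent K ![u, f u] := by
    by_contra! h
    obtain ⟨c, rfl⟩ := LinearMap.exists_eq_smul_id_of_forall_notLinearIndependent h
    exact hf c rfl
  obtain ⟨a, b, hgu⟩ := exists_eq_smul_add_smul_of_finrank_eq_two hV hu (g u)
  refine ⟨a, b, LinearMap.ext_on_range (span_range_pair_eq_top_of_finrank_eq_two hV hu) ?_⟩
  refine Fin.forall_fin_two.2 ⟨by simpa using hgu, ?_⟩
  calc g (f u) = f (g u) := (LinearMap.congr_fun hfg u).symm
    _ = _ := by simp [hgu]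

theorem commute_of_forall_exists_smul_eq_iff [IsAlgClosed K] (hV : finrank K V = 2)
    {f g : End K V} (h : ∀ v, (∃ μ : K, f v = μ • v) ↔ ∃ ν : K, g v = ν • v) : Commute f g := by
  have := finite_of_finrank_eq_succ hV
  have := nontrivial_of_finrank_eq_succ hV
  obtain ⟨μ, hμ⟩ := f.exists_eigenvalue
  obtain ⟨v, hv⟩ := hμ.exists_hasEigenvector
  obtain ⟨ν, hgv⟩ := (h v).1 ⟨μ, hv.apply_eq_smul⟩
  obtain ⟨w, hvw⟩ := exists_linearIndependent_pair_of_one_lt_finrank (R := K) (by omega) hv.2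
  obtain ⟨a, b, hfw⟩ := exists_eq_smul_add_smul_of_finrank_eq_two hV hvw (f w)
  obtain ⟨c, d, hgw⟩ := exists_eq_smul_add_smul_of_finrank_eq_two hV hvw (g w)
  refine LinearMap.ext_on_range (span_range_pair_eq_top_of_finrank_eq_two hV hvw) ?_
  refine Fin.forall_fin_two.2 ⟨by simp [hv.apply_eq_smul, hgv, smul_comm μ ν], ?_⟩
  show f (g w) = g (f w)
  by_cases hbμ : b = μ
  · by_cases hdν : d = ν
    · subst hbμ hdν
      simp only [hfw, hgw, map_add, map_smul, hv.apply_eq_smul, hgv]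
      module
    · exact (apply_apply_comm_of_upperTriangular hvw hgv hv.apply_eq_smul hgw hfw hdν
        fun u => (h u).2).symm
  · exact apply_apply_comm_of_upperTriangular hvw hv.apply_eq_smul hgv hfw hgw hbμ
      fun u => (h u).1

theorem commute_iff_forall_exists_smul_eq_iff [IsAlgClosed K] (hV : finrank K V = 2)
    {f g : End K V} (hf : ∀ c : K, f ≠ c • 1) (hg : ∀ c : K, g ≠ c • 1) :
    Commute f g ↔ ∀ v, (∃ μ : K, f v = μ • v) ↔ ∃ ν : K, g v = ν • v := by
  refine ⟨fun hfg => ?_, commute_of_forall_exists_smul_eq_iff hV⟩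
  obtain ⟨a, b, hab⟩ := exists_eq_smul_one_add_smul_of_commute hV hf hfg
  have hb : b ≠ 0 := by
    rintro rfl
    exact hg a (by simpa using hab)
  exact exists_smul_eq_iff_of_eq_smul_one_add_smul hb hab

end Module.End

namespace Matrix

lemma trace_mul_eq_zero_of_mul_eq_neg_mul {n R : Type*} [Fintype n] [CommRing R]
    [IsAddTorsionFree R] {A B : Matrix n n R} (h : A * B = -(B * A)) : (A * B).trace = 0 :=
  self_eq_neg.1 <| calc (A * B).trace = (-(B * A)).trace := congrArg trace h
    _ = -(A * B).trace := by rw [trace_neg, trace_mul_comm]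

lemma trace_eq_zero_of_mul_eq_neg_mul {n R : Type*} [Fintype n] [DecidableEq n] [CommRing R]
    [IsAddTorsionFree R] {A B : Matrix n n R} (hB : IsUnit B.det) (h : A * B = -(B * A)) :
    A.trace = 0 := by
  refine self_eq_neg.1 ?_
  calc A.trace = (B⁻¹ * (A * B)).trace := by
        rw [trace_mul_comm, mul_assoc, mul_nonsing_inv B hB, mul_one]
    _ = -A.trace := by rw [h, Matrix.mul_neg, trace_neg, ← mul_assoc, nonsing_inv_mul B hB, one_mul]

lemma trace_mul_ne_zero_of_trace_eq_zero {X Y : Matrix (Fin 2) (Fin 2) ℝ} (hX : X.trace = 0)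
    (hY : Y.trace = 0) (hdX : X.det = 1) (hdY : Y.det = 1) : (X * Y).trace ≠ 0 := by
  obtain ⟨a, b, c, d, rfl⟩ : ∃ a b c d, X = !![a, b; c, d] := ⟨_, _, _, _, X.eta_fin_two⟩
  obtain ⟨e, f, g, h, rfl⟩ : ∃ e f g h, Y = !![e, f; g, h] := ⟨_, _, _, _, Y.eta_fin_two⟩
  rw [trace_fin_two_of] at hX hY
  rw [det_fin_two_of] at hdX hdY
  rw [mul_fin_two, trace_fin_two_of]
  obtain rfl : d = -a := by linear_combination hX
  obtain rfl : h = -e := by linear_combination hY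
  intro hXY
  -- With `p = (b + c) / 2`, `q = (b - c) / 2` and similarly `p'`, `q'` for `Y`, the hypotheses
  -- read `q² = 1 + a² + p²`, `q'² = 1 + e² + p'²` and `q q' = a e + p p'`; square the last one.
  have key : 1 + a ^ 2 + e ^ 2 + ((b + c) / 2) ^ 2 + ((f + g) / 2) ^ 2
      + (a * ((f + g) / 2) - e * ((b + c) / 2)) ^ 2 = 0 := by
    linear_combination -((f - g) / 2) ^ 2 * hdX - (((b - c) / 2) ^ 2 + (a ^ 2 + b * c + 1)) * hdY
      - ((b - c) / 2 * ((f - g) / 2) + (2 * a * e + b * g + c * f) / 4) * hXY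
  have : 0 < 1 + a ^ 2 + e ^ 2 + ((b + c) / 2) ^ 2 + ((f + g) / 2) ^ 2
      + (a * ((f + g) / 2) - e * ((b + c) / 2)) ^ 2 := by positivity
  linarith

lemma mul_ne_neg_mul_of_det_eq_one {A B : Matrix (Fin 2) (Fin 2) ℝ} (hA : A.det = 1)
    (hB : B.det = 1) : A * B ≠ -(B * A) := fun h =>
  trace_mul_ne_zero_of_trace_eq_zero
    (trace_eq_zero_of_mul_eq_neg_mul (B := B) (by simp [hB]) h)
    (trace_eq_zero_of_mul_eq_neg_mul (B := A) (by simp [hA]) (by rw [h, neg_neg])) hA hB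
    (trace_mul_eq_zero_of_mul_eq_neg_mul h)

lemma eq_one_or_eq_neg_one_of_eq_smul_one {R : Type*} [CommRing R] [NoZeroDivisors R]
    {A : Matrix (Fin 2) (Fin 2) R} {c : R} (hA : A.det = 1) (h : A = c • 1) : A = 1 ∨ A = -1 := by
  subst h
  rw [det_smul, det_one, Fintype.card_fin, mul_one, sq_eq_one_iff] at hA
  rcases hA with rfl | rfl <;> simp

end Matrix

noncomputable def complexifiedEnd {n : Type*} [Fintype n] [DecidableEq n] :
    Matrix n n ℝ →+* End ℂ (n → ℂ) :=
  (Matrix.toLinAlgEquiv' : Matrix n n ℂ ≃ₐ[ℂ] End ℂ (n → ℂ)).toRingHom.comp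
    Complex.ofRealHom.mapMatrix

lemma complexifiedEnd_injective {n : Type*} [Fintype n] [DecidableEq n] :
    Function.Injective (complexifiedEnd (n := n)) :=
  Matrix.toLinAlgEquiv'.injective.comp (Matrix.map_injective Complex.ofReal_injective)

lemma complexifiedEnd_ne_smul_one {A : Matrix (Fin 2) (Fin 2) ℝ} (hA : A.det = 1) (hA1 : A ≠ 1)
    (hA1' : A ≠ -1) (c : ℂ) : complexifiedEnd A ≠ c • 1 := by
  intro h
  have hc : Complex.ofRealHom.mapMatrix A = c • 1 :=
    Matrix.toLinAlgEquiv'.injective (by rw [map_smul, map_one]; exact h)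
  have hdet : (Complex.ofRealHom.mapMatrix A).det = 1 := by
    rw [← RingHom.map_det, hA, map_one]
  have hmap : Function.Injective (Complex.ofRealHom.mapMatrix : Matrix (Fin 2) (Fin 2) ℝ →+* _) :=
    Matrix.map_injective Complex.ofReal_injective
  rcases Matrix.eq_one_or_eq_neg_one_of_eq_smul_one hdet hc with h1 | h1
  · exact hA1 (hmap (h1.trans (map_one Complex.ofRealHom.mapMatrix).symm))
  · exact hA1' (hmap (h1.trans (by rw [map_neg, map_one])))

/-- Two non-identity elements of PSL(2,ℝ) (represented by SL(2,ℝ) matrices `A`, `B`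
distinct from `±1`) commute (i.e. `A·B = ±B·A`) if and only if they have exactly the
same eigenvectors over ℂ, i.e. the same fixed points on the Riemann sphere. -/
theorem psl2_commute_iff_same_fixed_points (A B : Matrix (Fin 2) (Fin 2) ℝ)
    (hA : A.det = 1) (hB : B.det = 1)
    (hA1 : A ≠ 1) (hA1' : A ≠ -1) (hB1 : B ≠ 1) (hB1' : B ≠ -1) :
    (A * B = B * A ∨ A * B = -(B * A)) ↔
      ∀ v : Fin 2 → ℂ,
        (∃ μ : ℂ, (A.map (Complex.ofReal ·)).mulVec v = μ • v) ↔
        (∃ ν : ℂ, (B.map (Complex.ofReal ·)).mulVec v = ν • v) := by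
  rw [or_iff_left (Matrix.mul_ne_neg_mul_of_det_eq_one hA hB)]
  change Commute A B ↔ _
  rw [← commute_map_iff complexifiedEnd_injective]
  exact End.commute_iff_forall_exists_smul_eq_iff (by simp)
    (complexifiedEnd_ne_smul_one hA hA1 hA1') (complexifiedEnd_ne_smul_one hB hB1 hB1')
end

section
/- Let L := [[0,1],[−1,−1]], R := [[1,1],[−1,0]], and for z ∈ ℝ let X_z := [[0, −e^{z/2}],[e^{−z/2}, 0]]. Then any finite nonempty product of matrices, each factor being of the form R·X_z or L·X_z for some z ∈ ℝ, has strictly positive diagonal entries and nonpositive off-diagonal entries; i.e. if M = F_n·F_{n−1}·…·F_1 with each F_i ∈ {R·X_{z_i}, L·X_{z_i}}, then M₀₀ > 0, M₁₁ > 0, M₀₁ ≤ 0, and M₁₀ ≤ 0. In particular every element γ = R^{k_n}X_{z_n}⋯R^{k_1}X_{z_1} (k_i ∈ {1,2}) has the sign structure [[+,−],[−,+]]. -/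
/-! The sign pattern `[[+, -], [-, +]]` of a 2×2 matrix is preserved under multiplication and
holds for the identity, so such matrices form a submonoid. Both
`R·X_z = [[e^{-z/2}, -e^{z/2}], [0, e^{z/2}]]` and `L·X_z = [[e^{-z/2}, 0], [-e^{-z/2}, e^{z/2}]]`
lie in it, hence so does every product of them. -/

namespace Matrix

variable (α : Type*) [Ring α] [PartialOrder α] [IsStrictOrderedRing α]

def posDiagNonposOffDiag : Submonoid (Matrix (Fin 2) (Fin 2) α) where
  carrier := {M | 0 < M 0 0 ∧ 0 < M 1 1 ∧ M 0 1 ≤ 0 ∧ M 1 0 ≤ 0}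
  one_mem' := by simp
  mul_mem' := by
    rintro A B ⟨a00, a11, a01, a10⟩ ⟨b00, b11, b01, b10⟩
    simp only [Set.mem_ofPred_eq, mul_apply, Fin.sum_univ_two]
    exact ⟨add_pos_of_pos_of_nonneg (mul_pos a00 b00) (mul_nonneg_of_nonpos_of_nonpos a01 b10),
      add_pos_of_nonneg_of_pos (mul_nonneg_of_nonpos_of_nonpos a10 b01) (mul_pos a11 b11),
      add_nonpos (mul_nonpos_of_nonneg_of_nonpos a00.le b01)
        (mul_nonpos_of_nonpos_of_nonneg a01 b11.le),
      add_nonpos (mul_nonpos_of_nonpos_of_nonneg a10 b00.le)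
        (mul_nonpos_of_nonneg_of_nonpos a11.le b10)⟩

variable {α}

lemma mem_posDiagNonposOffDiag {M : Matrix (Fin 2) (Fin 2) α} :
    M ∈ posDiagNonposOffDiag α ↔ 0 < M 0 0 ∧ 0 < M 1 1 ∧ M 0 1 ≤ 0 ∧ M 1 0 ≤ 0 :=
  Iff.rfl

lemma R_mul_antidiag_mem_posDiagNonposOffDiag {a b : α} (ha : 0 < a) (hb : 0 < b) :
    !![1, 1; -1, 0] * !![0, -a; b, 0] ∈ posDiagNonposOffDiag α := by
  simp [mem_posDiagNonposOffDiag, ha, hb, ha.le]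

lemma L_mul_antidiag_mem_posDiagNonposOffDiag {a b : α} (ha : 0 < a) (hb : 0 < b) :
    !![0, 1; -1, -1] * !![0, -a; b, 0] ∈ posDiagNonposOffDiag α := by
  simp [mem_posDiagNonposOffDiag, ha, hb, hb.le]

end Matrix

theorem sign_structure_general (fs : List (Matrix (Fin 2) (Fin 2) ℝ))
    (hfs : ∀ f ∈ fs, ∃ z : ℝ,
      f = !![1, 1; -1, 0] * !![0, -Real.exp (z / 2); Real.exp (-(z / 2)), 0] ∨
      f = !![0, 1; -1, -1] * !![0, -Real.exp (z / 2); Real.exp (-(z / 2)), 0]) :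
    0 < fs.prod 0 0 ∧ 0 < fs.prod 1 1 ∧ fs.prod 0 1 ≤ 0 ∧ fs.prod 1 0 ≤ 0 := by
  refine Matrix.mem_posDiagNonposOffDiag.mp (Submonoid.list_prod_mem _ fun f hf => ?_)
  obtain ⟨z, rfl | rfl⟩ := hfs f hf
  · exact Matrix.R_mul_antidiag_mem_posDiagNonposOffDiag (Real.exp_pos _) (Real.exp_pos _)
  · exact Matrix.L_mul_antidiag_mem_posDiagNonposOffDiag (Real.exp_pos _) (Real.exp_pos _)

/-- Any finite nonempty product of matrices of the form `R·X_z` or `L·X_z` has strictly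
positive diagonal entries and nonpositive off-diagonal entries: the sign structure
`[[+,-],[-,+]]`. -/
theorem sign_structure (fs : List (Matrix (Fin 2) (Fin 2) ℝ)) (hne : fs ≠ [])
    (hfs : ∀ f ∈ fs, ∃ z : ℝ,
      f = !![1, 1; -1, 0] * !![0, -Real.exp (z / 2); Real.exp (-(z / 2)), 0] ∨
      f = !![0, 1; -1, -1] * !![0, -Real.exp (z / 2); Real.exp (-(z / 2)), 0]) :
    0 < fs.prod 0 0 ∧ 0 < fs.prod 1 1 ∧ fs.prod 0 1 ≤ 0 ∧ fs.prod 1 0 ≤ 0 :=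
  sign_structure_general fs hfs
end

section
/- Let L := [[0,1],[−1,−1]], R := [[1,1],[−1,0]], and for z ∈ ℝ let X_z := [[0, −e^{z/2}],[e^{−z/2}, 0]]. For (z₀, z₁, z₂) ∈ ℝ³ define the matrix-valued functions P(z₀,z₁,z₂) := L·X_{z₂}·R·X_{z₀} and Q(z₀,z₁,z₂) := R·X_{z₁}·L·X_{z₀}, and let F := trace∘P and G := trace∘Q. Then for all (z₀,z₁,z₂) ∈ ℝ³: 2·(∂F/∂z₂)·(∂G/∂z₀) + 2·(∂F/∂z₀)·(∂G/∂z₁) − 2·(∂F/∂z₂)·(∂G/∂z₁) = (1/2)·trace(P·Q) − (1/2)·trace(P·Q⁻¹). That is, the Poisson bracket {trace P, trace Q} induced by {z₀,z₁} = {z₁,z₂} = {z₂,z₀} = 2 equals ½·G_{PQ} − ½·G_{PQ⁻¹} (the Goldman bracket). -/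
/-!
In each shear coordinate the matrices depend on `z` only through
`X_z = X_0 · diag(e^{-z/2}, e^{z/2})`, so after cycling the trace to put `X_z` last, every
partial derivative of a geodesic function is again a trace, with the generator `diag(-½, ½)`
inserted after `X_z`. Since `det Q = 1`, Cayley–Hamilton gives `Q⁻¹ = (tr Q) · 1 - Q`, hence
`tr(PQ⁻¹) = tr P · tr Q - tr(PQ)`. What remains is an identity of Laurent polynomials in
`e^{z₀/2}, e^{z₁/2}, e^{z₂/2}`.
-/

open Real Matrix

theorem Matrix.trace_mul_inv_of_det_eq_one {R : Type*} [CommRing R]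
    (A B : Matrix (Fin 2) (Fin 2) R) (hB : B.det = 1) :
    (A * B⁻¹).trace = A.trace * B.trace - (A * B).trace := by
  rw [inv_def, hB, Ring.inverse_one, one_smul, adjugate_fin_two]
  simp only [trace_fin_two, mul_apply, Fin.sum_univ_two, of_apply, cons_val', cons_val_zero,
    cons_val_one, cons_val_fin_one]
  ring

theorem Matrix.trace_mul_mul_mul_rotate {R : Type*} [CommSemiring R] {n : Type*} [Fintype n]
    (A B C D : Matrix n n R) : (A * B * C * D).trace = (C * D * A * B).trace := by
  simpa only [Matrix.mul_assoc] using trace_mul_comm (A * B) (C * D)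

namespace PuncturedTorus

def leftTurn : Matrix (Fin 2) (Fin 2) ℝ := !![0, 1; -1, -1]

def rightTurn : Matrix (Fin 2) (Fin 2) ℝ := !![1, 1; -1, 0]

noncomputable def shear (z : ℝ) : Matrix (Fin 2) (Fin 2) ℝ :=
  !![0, -exp (z / 2); exp (-(z / 2)), 0]

-- `shear z = shear 0 * diag (exp (-(z / 2)), exp (z / 2))`
noncomputable def shearGenerator : Matrix (Fin 2) (Fin 2) ℝ := !![-1 / 2, 0; 0, 1 / 2]

theorem det_leftTurn : leftTurn.det = 1 := by
  norm_num [leftTurn, det_fin_two]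

theorem det_rightTurn : rightTurn.det = 1 := by
  norm_num [rightTurn, det_fin_two]

theorem det_shear (z : ℝ) : (shear z).det = 1 := by
  simp [shear, det_fin_two, ← exp_add]

theorem trace_mul_shear (M : Matrix (Fin 2) (Fin 2) ℝ) (t : ℝ) :
    (M * shear t).trace = M 0 1 * exp (-(t / 2)) - M 1 0 * exp (t / 2) := by
  simp only [shear, trace_fin_two, mul_apply, Fin.sum_univ_two, of_apply, cons_val',
    cons_val_zero, cons_val_one, cons_val_fin_one]
  ring

theorem hasDerivAt_trace_mul_shear (M : Matrix (Fin 2) (Fin 2) ℝ) (z : ℝ) :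
    HasDerivAt (fun t => (M * shear t).trace) (M * shear z * shearGenerator).trace z := by
  have hexp : HasDerivAt (fun t => exp (t / 2)) (exp (z / 2) * (1 / 2)) z :=
    ((hasDerivAt_id z).div_const 2).exp
  have hexp_neg : HasDerivAt (fun t => exp (-(t / 2))) (exp (-(z / 2)) * -(1 / 2)) z :=
    ((hasDerivAt_id z).div_const 2).neg.exp
  simp only [trace_mul_shear]
  refine ((hexp_neg.const_mul (M 0 1)).sub (hexp.const_mul (M 1 0))).congr_deriv ?_
  simp only [shear, shearGenerator, trace_fin_two, mul_apply, Fin.sum_univ_two,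
    of_apply, cons_val', cons_val_zero, cons_val_one, cons_val_fin_one]
  ring

theorem deriv_trace_mul_shear (M : Matrix (Fin 2) (Fin 2) ℝ) (z : ℝ) :
    deriv (fun t => (M * shear t).trace) z = (M * shear z * shearGenerator).trace :=
  (hasDerivAt_trace_mul_shear M z).deriv

end PuncturedTorus

open PuncturedTorus in
/-- The Poisson bracket induced by `{z₀,z₁} = {z₁,z₂} = {z₂,z₀} = 2` of the geodesic
functions `F = trace(L·X_{z₂}·R·X_{z₀})` and `G = trace(R·X_{z₁}·L·X_{z₀})` of the
once-punctured torus equals the Goldman bracket `½·trace(PQ) - ½·trace(PQ⁻¹)`. -/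
theorem goldman_bracket_torus (z₀ z₁ z₂ : ℝ) :
    let L : Matrix (Fin 2) (Fin 2) ℝ := !![0, 1; -1, -1]
    let R : Matrix (Fin 2) (Fin 2) ℝ := !![1, 1; -1, 0]
    let X : ℝ → Matrix (Fin 2) (Fin 2) ℝ :=
      fun z => !![0, -Real.exp (z / 2); Real.exp (-(z / 2)), 0]
    let P : ℝ → ℝ → ℝ → Matrix (Fin 2) (Fin 2) ℝ := fun a _ c => L * X c * R * X a
    let Q : ℝ → ℝ → ℝ → Matrix (Fin 2) (Fin 2) ℝ := fun a b _ => R * X b * L * X a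
    let F : ℝ → ℝ → ℝ → ℝ := fun a b c => (P a b c).trace
    let G : ℝ → ℝ → ℝ → ℝ := fun a b c => (Q a b c).trace
    2 * deriv (fun t => F z₀ z₁ t) z₂ * deriv (fun t => G t z₁ z₂) z₀
      + 2 * deriv (fun t => F t z₁ z₂) z₀ * deriv (fun t => G z₀ t z₂) z₁
      - 2 * deriv (fun t => F z₀ z₁ t) z₂ * deriv (fun t => G z₀ t z₂) z₁
    = (1 / 2) * (P z₀ z₁ z₂ * Q z₀ z₁ z₂).trace
      - (1 / 2) * (P z₀ z₁ z₂ * (Q z₀ z₁ z₂)⁻¹).trace := by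
  intro L R X P Q F G
  simp only [F, G, P, Q]
  rw [show X = shear from rfl, show L = leftTurn from rfl, show R = rightTurn from rfl]
  have det_Q : (rightTurn * shear z₁ * leftTurn * shear z₀).det = 1 := by
    simp only [det_mul, det_leftTurn, det_rightTurn, det_shear, one_mul]
  rw [trace_mul_inv_of_det_eq_one _ _ det_Q]
  simp_rw [trace_mul_mul_mul_rotate leftTurn (shear _) rightTurn (shear z₀),
    trace_mul_mul_mul_rotate rightTurn (shear _) leftTurn (shear z₀), deriv_trace_mul_shear]
  simp only [leftTurn, rightTurn, shear, shearGenerator, exp_neg, mul_fin_two, trace_fin_two,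
    of_apply, cons_val', cons_val_zero, cons_val_one, cons_val_fin_one]
  field_simp
  ring
end

section
/- Let L := [[0,1],[−1,−1]], R := [[1,1],[−1,0]], and for z ∈ ℝ let X_z := [[0, −e^{z/2}],[e^{−z/2}, 0]]. For (z₀, z₁, z₂) ∈ ℝ³ define P := L·X_{z₂}·R·X_{z₀} and Q := R·X_{z₁}·L·X_{z₀}, and let F := trace∘P, G := trace∘Q. Then for all (z₀,z₁,z₂) ∈ ℝ³: 2·(∂F/∂z₂)·(∂G/∂z₀) + 2·(∂F/∂z₀)·(∂G/∂z₁) − 2·(∂F/∂z₂)·(∂G/∂z₁) = (1/2)·trace(P)·trace(Q) − trace(P·Q⁻¹). That is, the Poisson algebra of the geodesic functions G_A = trace P and G_B = trace Q closes via the skein relation as {G_A, G_B} = ½·G_A·G_B − G_{AB⁻¹}. -/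
/-!
The shear matrix satisfies `d/dz X_z = X_z · diag(-1/2, 1/2)`, so each partial derivative of a trace
of a word in `L`, `R` and the `X_{zᵢ}` is again the trace of such a word. Since `det Q = 1`,
Cayley–Hamilton gives `Q⁻¹ = tr Q · 1 - Q`, hence `tr (P Q⁻¹) = tr P · tr Q - tr (P Q)`, and what
remains is an identity between Laurent polynomials in the `exp (zᵢ / 2)`.
-/

open Real Matrix

namespace Matrix

variable {R : Type*} [CommRing R]

theorem adjugate_fin_two_eq_trace_smul_one_sub (A : Matrix (Fin 2) (Fin 2) R) :
    adjugate A = A.trace • (1 : Matrix (Fin 2) (Fin 2) R) - A := by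
  ext i j; fin_cases i <;> fin_cases j <;> simp [adjugate_fin_two, trace_fin_two]

theorem trace_mul_inv_fin_two_of_det_eq_one (A B : Matrix (Fin 2) (Fin 2) R) (hB : B.det = 1) :
    (A * B⁻¹).trace = A.trace * B.trace - (A * B).trace := by
  rw [inv_def, hB, Ring.inverse_one, one_smul, adjugate_fin_two_eq_trace_smul_one_sub,
    Matrix.mul_sub, Matrix.mul_smul, Matrix.mul_one, trace_sub, trace_smul, smul_eq_mul, mul_comm]

end Matrix

noncomputable def shear (z : ℝ) : Matrix (Fin 2) (Fin 2) ℝ :=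
  !![0, -exp (z / 2); exp (-(z / 2)), 0]

noncomputable def shearGen : Matrix (Fin 2) (Fin 2) ℝ := !![-1 / 2, 0; 0, 1 / 2]

theorem det_shear (z : ℝ) : (shear z).det = 1 := by
  simp [shear, det_fin_two_of, ← exp_add]

theorem trace_mul_shear (M : Matrix (Fin 2) (Fin 2) ℝ) (z : ℝ) :
    (M * shear z).trace = M 0 1 * exp (-(z / 2)) - M 1 0 * exp (z / 2) := by
  rw [trace_fin_two]
  simp [shear, mul_apply, Fin.sum_univ_two, sub_eq_add_neg, add_comm, mul_comm]

theorem hasDerivAt_trace_mul_shear (M : Matrix (Fin 2) (Fin 2) ℝ) (z : ℝ) :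
    HasDerivAt (fun t => (M * shear t).trace) (M * shear z * shearGen).trace z := by
  have half := (hasDerivAt_id' z).div_const 2
  have h := (half.neg.exp.const_mul (M 0 1)).sub (half.exp.const_mul (M 1 0))
  rw [show (fun t => (M * shear t).trace) = _ from funext (trace_mul_shear M)]
  refine h.congr_deriv ?_
  simp only [shear, shearGen, trace_fin_two, mul_apply, Fin.sum_univ_two, of_apply, cons_val',
    cons_val_zero, cons_val_one, cons_val_fin_one, Pi.neg_apply]
  ring

theorem hasDerivAt_trace_mul_shear_mul (A B : Matrix (Fin 2) (Fin 2) ℝ) (z : ℝ) :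
    HasDerivAt (fun t => (A * shear t * B).trace) (A * shear z * shearGen * B).trace z := by
  convert hasDerivAt_trace_mul_shear (B * A) z using 1
  · exact funext fun t => trace_mul_cycle A (shear t) B
  · rw [trace_mul_comm, ← Matrix.mul_assoc, ← Matrix.mul_assoc]

/-- The Poisson bracket induced by `{z₀,z₁} = {z₁,z₂} = {z₂,z₀} = 2` of the geodesic
functions `F = trace(L·X_{z₂}·R·X_{z₀})` and `G = trace(R·X_{z₁}·L·X_{z₀})` of the
once-punctured torus closes via the skein relation as `{G_A, G_B} = ½·G_A·G_B - G_{AB⁻¹}`. -/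
theorem poisson_skein_closure_torus (z₀ z₁ z₂ : ℝ) :
    let L : Matrix (Fin 2) (Fin 2) ℝ := !![0, 1; -1, -1]
    let R : Matrix (Fin 2) (Fin 2) ℝ := !![1, 1; -1, 0]
    let X : ℝ → Matrix (Fin 2) (Fin 2) ℝ :=
      fun z => !![0, -Real.exp (z / 2); Real.exp (-(z / 2)), 0]
    let P : ℝ → ℝ → ℝ → Matrix (Fin 2) (Fin 2) ℝ := fun a _ c => L * X c * R * X a
    let Q : ℝ → ℝ → ℝ → Matrix (Fin 2) (Fin 2) ℝ := fun a b _ => R * X b * L * X a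
    let F : ℝ → ℝ → ℝ → ℝ := fun a b c => (P a b c).trace
    let G : ℝ → ℝ → ℝ → ℝ := fun a b c => (Q a b c).trace
    2 * deriv (fun t => F z₀ z₁ t) z₂ * deriv (fun t => G t z₁ z₂) z₀
      + 2 * deriv (fun t => F t z₁ z₂) z₀ * deriv (fun t => G z₀ t z₂) z₁
      - 2 * deriv (fun t => F z₀ z₁ t) z₂ * deriv (fun t => G z₀ t z₂) z₁
    = (1 / 2) * (P z₀ z₁ z₂).trace * (Q z₀ z₁ z₂).trace
      - (P z₀ z₁ z₂ * (Q z₀ z₁ z₂)⁻¹).trace := by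
  intro L R X P Q F G
  have hQ : (Q z₀ z₁ z₂).det = 1 := by
    show (R * shear z₁ * L * shear z₀).det = 1
    simp only [det_mul, det_shear]
    norm_num [L, R, det_fin_two_of]
  have dF₂ : deriv (fun t => F z₀ z₁ t) z₂ = (L * shear z₂ * shearGen * (R * shear z₀)).trace := by
    show deriv (fun t => (L * shear t * R * shear z₀).trace) z₂ = _
    simpa only [Matrix.mul_assoc] using (hasDerivAt_trace_mul_shear_mul L (R * shear z₀) z₂).deriv
  have dF₀ : deriv (fun t => F t z₁ z₂) z₀ = (L * shear z₂ * R * shear z₀ * shearGen).trace :=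
    (hasDerivAt_trace_mul_shear (L * shear z₂ * R) z₀).deriv
  have dG₀ : deriv (fun t => G t z₁ z₂) z₀ = (R * shear z₁ * L * shear z₀ * shearGen).trace :=
    (hasDerivAt_trace_mul_shear (R * shear z₁ * L) z₀).deriv
  have dG₁ : deriv (fun t => G z₀ t z₂) z₁ = (R * shear z₁ * shearGen * (L * shear z₀)).trace := by
    show deriv (fun t => (R * shear t * L * shear z₀).trace) z₁ = _
    simpa only [Matrix.mul_assoc] using (hasDerivAt_trace_mul_shear_mul R (L * shear z₀) z₁).deriv
  rw [dF₂, dF₀, dG₀, dG₁, trace_mul_inv_fin_two_of_det_eq_one _ _ hQ]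
  have h₀ := (exp_pos (z₀ / 2)).ne'
  have h₁ := (exp_pos (z₁ / 2)).ne'
  have h₂ := (exp_pos (z₂ / 2)).ne'
  simp only [P, Q, X, shear, Real.exp_neg, shearGen, L, R, mul_fin_two, trace_fin_two_of]
  field_simp
  ring
end

section
/- Let A = ℝ[x, y, z] be the polynomial algebra in three variables over ℝ (MvPolynomial (Fin 3) ℝ with x = X 0, y = X 1, z = X 2), and define the bracket B : A × A → A by B(f,g) := (½xy − z)·(∂ₓf·∂ᵧg − ∂ᵧf·∂ₓg) + (½yz − x)·(∂ᵧf·∂_zg − ∂_zf·∂ᵧg) + (½zx − y)·(∂_zf·∂ₓg − ∂ₓf·∂_zg), so that B(x,y) = ½xy − z, B(y,z) = ½yz − x, B(z,x) = ½zx − y. Then the element C := x² + y² + z² − x·y·z is central: B(C, f) = 0 for every polynomial f ∈ A. -/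
/-!
The bracket is the Nambu bracket `B(f, g) = v ⬝ (∇f × ∇g)` whose coefficient field
`v = (½yz - x, ½zx - y, ½xy - z)` is `-½ ∇Ω` for `Ω = x² + y² + z² - xyz`. Hence
`B(Ω, g) = -½ ∇Ω ⬝ (∇Ω × ∇g)` is a triple product with a repeated vector, so it vanishes.
-/

open MvPolynomial Matrix

namespace MvPolynomial

variable {R : Type*} [CommRing R]

noncomputable def grad (p : MvPolynomial (Fin 3) R) : Fin 3 → MvPolynomial (Fin 3) R :=
  fun i => pderiv i p

noncomputable def nambuBracket (v : Fin 3 → MvPolynomial (Fin 3) R)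
    (f g : MvPolynomial (Fin 3) R) : MvPolynomial (Fin 3) R :=
  v ⬝ᵥ grad f ⨯₃ grad g

theorem nambuBracket_eq_zero_of_eq_smul_grad {v : Fin 3 → MvPolynomial (Fin 3) R}
    {c Ω : MvPolynomial (Fin 3) R} (hv : v = c • grad Ω) (g : MvPolynomial (Fin 3) R) :
    nambuBracket v Ω g = 0 := by
  rw [nambuBracket, hv, smul_dotProduct, dot_self_cross, smul_zero]

theorem grad_sq_add_sq_add_sq_sub_mul_mul :
    grad (X 0 ^ 2 + X 1 ^ 2 + X 2 ^ 2 - X 0 * X 1 * X 2 : MvPolynomial (Fin 3) R) =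
      ![2 * X 0 - X 1 * X 2, 2 * X 1 - X 0 * X 2, 2 * X 2 - X 0 * X 1] := by
  funext i
  fin_cases i <;>
    simp only [grad, map_sub, map_add, Derivation.leibniz_pow, Derivation.leibniz, pderiv_X_self,
      pderiv_X_of_ne, Fin.reduceEq, ne_eq, not_false_eq_true, Fin.reduceFinMk, cons_val] <;>
    ring

end MvPolynomial

/-- In the Poisson algebra ℝ[x,y,z] with bracket determined by
`B(x,y) = ½xy - z`, `B(y,z) = ½yz - x`, `B(z,x) = ½zx - y` (extended via formal partial
derivatives), the element `x² + y² + z² - x·y·z` is central. -/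
theorem casimir_central :
    let x : MvPolynomial (Fin 3) ℝ := X 0
    let y : MvPolynomial (Fin 3) ℝ := X 1
    let z : MvPolynomial (Fin 3) ℝ := X 2
    let dx := pderiv (0 : Fin 3)
    let dy := pderiv (1 : Fin 3)
    let dz := pderiv (2 : Fin 3)
    let B : MvPolynomial (Fin 3) ℝ → MvPolynomial (Fin 3) ℝ → MvPolynomial (Fin 3) ℝ :=
      fun f g =>
        (C (1 / 2 : ℝ) * x * y - z) * (dx f * dy g - dy f * dx g) +
        (C (1 / 2 : ℝ) * y * z - x) * (dy f * dz g - dz f * dy g) +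
        (C (1 / 2 : ℝ) * z * x - y) * (dz f * dx g - dx f * dz g)
    B x y = C (1 / 2 : ℝ) * x * y - z ∧
    B y z = C (1 / 2 : ℝ) * y * z - x ∧
    B z x = C (1 / 2 : ℝ) * z * x - y ∧
    ∀ f : MvPolynomial (Fin 3) ℝ, B (x ^ 2 + y ^ 2 + z ^ 2 - x * y * z) f = 0 := by
  intro x y z dx dy dz B
  let v : Fin 3 → MvPolynomial (Fin 3) ℝ :=
    ![C (1 / 2 : ℝ) * y * z - x, C (1 / 2 : ℝ) * z * x - y, C (1 / 2 : ℝ) * x * y - z]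
  have hB (f g) : B f g = nambuBracket v f g := by
    rw [nambuBracket, cross_apply, vec3_dotProduct']
    simp only [B, grad]
    ring
  have hv : v = (-C (1 / 2) : MvPolynomial (Fin 3) ℝ) •
      grad (x ^ 2 + y ^ 2 + z ^ 2 - x * y * z) := by
    have hC : 2 * C (1 / 2 : ℝ) = (1 : MvPolynomial (Fin 3) ℝ) := by
      rw [← map_ofNat C 2, ← C_mul]; norm_num
    rw [grad_sq_add_sq_add_sq_sub_mul_mul, smul_vec3, smul_eq_mul, smul_eq_mul, smul_eq_mul]
    exact vec3_eq (by linear_combination x * hC) (by linear_combination y * hC)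
      (by linear_combination z * hC)
  refine ⟨?_, ?_, ?_, fun f => (hB _ f).trans (nambuBracket_eq_zero_of_eq_smul_grad hv f)⟩ <;>
    simp [B, x, y, z, dx, dy, dz, pderiv_X]
end
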